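/- Let $M \ge 2$. Every subspace $L \subseteq \wedge^2 \mathbb{C}^M$ of codimension at most 2 is spanned by the decomposable 2-vectors it contains. -/

import Mathlib

open scoped InnerProductSpace

noncomputable section

/-- The `N`-fold tensor power of `ℂ^M`, realized as the Euclidean space with
orthonormal basis indexed by multi-indices `Fin N → Fin M`. -/
abbrev TensorPow (N M : ℕ) : Type := EuclideanSpace ℂ (Fin N → Fin M)

/-- The wedge (Slater determinant) of a family of `N` vectors in `ℂ^M`:
`|v 0⟩ ∧ ⋯ ∧ |v (N-1)⟩ = ∑ σ, sgn σ • |v σ(0), …, v σ(N-1)⟩`. -/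
def wedge {N M : ℕ} (v : Fin N → EuclideanSpace ℂ (Fin M)) : TensorPow N M :=
  WithLp.toLp 2 (fun x => ∑ σ : Equiv.Perm (Fin N), ((Equiv.Perm.sign σ : ℤ) : ℂ) * ∏ k, v (σ k) (x k))

/-- The exterior power `⋀^N ℂ^M`, i.e. the subspace of antisymmetric tensors
in `(ℂ^M)^{⊗N}`. -/
def exteriorPow (N M : ℕ) : Submodule ℂ (TensorPow N M) where
  carrier := {ψ | ∀ σ : Equiv.Perm (Fin N), ∀ x : Fin N → Fin M,
    ψ (x ∘ σ) = ((Equiv.Perm.sign σ : ℤ) : ℂ) * ψ x}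
  add_mem' := by
    intro a b ha hb σ x
    have h1 := ha σ x
    have h2 := hb σ x
    show a (x ∘ σ) + b (x ∘ σ) = ((Equiv.Perm.sign σ : ℤ) : ℂ) * (a x + b x)
    rw [h1, h2]; ring
  zero_mem' := by
    intro σ x
    show (0 : ℂ) = ((Equiv.Perm.sign σ : ℤ) : ℂ) * (0 : ℂ)
    ring
  smul_mem' := by
    intro c a ha σ x
    have h1 := ha σ x
    show c * a (x ∘ σ) = ((Equiv.Perm.sign σ : ℤ) : ℂ) * (c * a x)
    rw [h1]; ring

/-- A decomposable (Slater determinant) vector in `⋀^N ℂ^M`. -/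
def IsSlater {N M : ℕ} (ψ : TensorPow N M) : Prop :=
  ∃ v : Fin N → EuclideanSpace ℂ (Fin M), ψ = wedge v

/-!
Dually, `L = E ∩ ker G ∩ ker H` for two functionals `G, H` on the tensor space, where
`E = ⋀² ℂ^M`, and a functional `f` killing the decomposable vectors of `L` has to lie in
`span {G, H}` on `E`. Pulling back along `(v, w) ↦ v ∧ w` turns `f, G, H` into alternating forms
on `ℂ^M`; since the vectors `v ∧ w` span `E`, it suffices that an alternating form `F` vanishing on
the common zeros of two alternating forms `G, H` is a combination of them.

For each `v`, `F v` vanishes on `ker (G v) ∩ ker (H v)`, so `F v ∈ span {G v, H v}`. If `G v₀` and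
`H v₀` are independent, comparing these memberships along the line `v₀ + t • v` shows that
`F - α • G - β • H` is a multiple of the rank-two form `G v₀ ∧ H v₀`. Were `G v₀ ∧ H v₀` outside
`span {G, H}`, the same argument at every `v` would make `G` and `H` vanish on
`(ker (G v₀) ∩ ker (H v₀))²`, and one could then solve for a common zero of `G` and `H` on which
`G v₀ ∧ H v₀` equals `1`.
-/

open Module Submodule
open LinearMap (ker)

variable {K V : Type*} [Field K] [AddCommGroup V] [Module K V]

theorem exists_smul_eq_of_not_linearIndependent_pair {W : Type*} [AddCommGroup W] [Module K W]
    {x y : W} (hx : x ≠ 0) (h : ¬ LinearIndependent K ![x, y]) : ∃ c : K, c • x = y := by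
  by_contra! hc
  exact h ((LinearIndependent.pair_iff' hx).mpr hc)

namespace Module.Dual

theorem mem_span_pair_of_ker_inf_le {a b f : Dual K V} (h : ker a ⊓ ker b ≤ ker f) :
    f ∈ span K {a, b} := by
  have := mem_span_of_iInf_ker_le_ker (L := ![a, b]) (K := f)
    ((le_inf (iInf_le _ 0) (iInf_le _ 1)).trans h)
  rwa [Matrix.range_cons_cons_empty] at this

theorem mem_span_singleton_of_ker_le {a f : Dual K V} (h : ker a ≤ ker f) : f ∈ K ∙ a := by
  have := mem_span_pair_of_ker_inf_le (a := a) (b := a) (f := f) (by rwa [inf_idem])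
  rwa [Set.pair_eq_singleton] at this

theorem exists_biorthogonal {a b : Dual K V} (h : LinearIndependent K ![a, b]) :
    ∃ u₁ u₂ : V, a u₁ = 1 ∧ b u₁ = 0 ∧ a u₂ = 0 ∧ b u₂ = 1 := by
  have hdual : ∀ {a b : Dual K V}, LinearIndependent K ![a, b] → ∃ u, a u = 1 ∧ b u = 0 := by
    intro a b hab
    obtain ⟨u, hbu, hau⟩ : ∃ u, b u = 0 ∧ a u ≠ 0 := by
      by_contra! hba
      obtain ⟨c, hc⟩ := mem_span_singleton.mp (mem_span_singleton_of_ker_le (a := b) (f := a) hba)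
      have := (LinearIndependent.pair_iff.mp hab (-1) c (by rw [← hc]; simp)).1
      norm_num at this
    exact ⟨(a u)⁻¹ • u, by simp [hau], by simp [hbu]⟩
  obtain ⟨u₁, h₁⟩ := hdual h
  obtain ⟨u₂, h₂⟩ := hdual (LinearIndependent.pair_symm_iff.mp h)
  exact ⟨u₁, u₂, h₁.1, h₁.2, h₂.2, h₂.1⟩

theorem exists_apply_ne_zero_and_apply_ne_zero {a b : Dual K V} (ha : a ≠ 0) (hb : b ≠ 0) :
    ∃ w, a w ≠ 0 ∧ b w ≠ 0 := by
  obtain ⟨u, hu⟩ : ∃ u, a u ≠ 0 := by by_contra! h; exact ha (LinearMap.ext h)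
  obtain ⟨w, hw⟩ : ∃ w, b w ≠ 0 := by by_contra! h; exact hb (LinearMap.ext h)
  by_cases hbu : b u = 0
  · by_cases haw : a w = 0
    · exact ⟨u + w, by simp [haw, hu], by simp [hbu, hw]⟩
    · exact ⟨w, haw, hw⟩
  · exact ⟨u, hu, hbu⟩

def wedgeForm (g h : Dual K V) : LinearMap.BilinForm K V := g.smulRight h - h.smulRight g

@[simp]
theorem wedgeForm_apply (g h : Dual K V) (v w : V) :
    g.wedgeForm h v w = g v * h w - h v * g w := by
  simp [wedgeForm]

theorem isAlt_wedgeForm (g h : Dual K V) : (g.wedgeForm h).IsAlt :=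
  fun v => by simp only [wedgeForm_apply]; ring

theorem wedgeForm_eq_zero_of_not_linearIndependent {g h : Dual K V}
    (hgh : ¬ LinearIndependent K ![g, h]) : g.wedgeForm h = 0 := by
  by_cases hg : g = 0
  · ext; simp [hg]
  obtain ⟨c, rfl⟩ := exists_smul_eq_of_not_linearIndependent_pair hg hgh
  ext; simp; ring

theorem det_eq_zero_of_mem_span_pair {f a b : Dual K V} (h : f ∈ span K {a, b})
    (w u₁ u₂ : V) :
    f w * (a u₁ * b u₂ - a u₂ * b u₁) - f u₁ * (a w * b u₂ - a u₂ * b w)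
      + f u₂ * (a w * b u₁ - a u₁ * b w) = 0 := by
  obtain ⟨p, q, rfl⟩ := mem_span_pair.mp h
  simp only [LinearMap.add_apply, LinearMap.smul_apply, smul_eq_mul]
  ring

end Module.Dual

theorem LinearMap.eq_of_eqOn_compl_ker {W X : Type*} [AddCommGroup W] [Module K W]
    [AddCommGroup X] [Module K X] {f g : V →ₗ[K] W} {p : V →ₗ[K] X} (hp : p ≠ 0)
    (h : ∀ v, p v ≠ 0 → f v = g v) : f = g := by
  obtain ⟨v₁, hv₁⟩ : ∃ v, p v ≠ 0 := by by_contra! h; exact hp (LinearMap.ext h)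
  ext v
  by_cases hv : p v = 0
  · have := h (v + v₁) (by simpa [hv] using hv₁)
    simpa [h v₁ hv₁] using this
  · exact h v hv

namespace LinearMap.BilinForm

variable {G H F P : LinearMap.BilinForm K V}

theorem exists_eq_smul_of_isAlt (hG : G.IsAlt) (hF : F.IsAlt) (hG0 : G ≠ 0)
    (h : ∀ v, G v ≠ 0 → F v ∈ K ∙ G v) : ∃ c : K, F = c • G := by
  choose! c hc using fun v hv => mem_span_singleton.mp (h v hv)
  have hne : ∀ {v w}, G v w ≠ 0 → G v ≠ 0 := fun hvw h0 => hvw (by simp [h0])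
  have hpair : ∀ v w, G v w ≠ 0 → c v = c w := by
    intro v w hvw
    have hwv : G w v ≠ 0 := by rwa [← hG.neg_eq, neg_ne_zero]
    have hFv := LinearMap.congr_fun (hc v (hne hvw)) w
    have hFw := LinearMap.congr_fun (hc w (hne hwv)) v
    simp only [LinearMap.smul_apply, smul_eq_mul] at hFv hFw
    rw [← hF.neg_eq, ← hG.neg_eq] at hFw
    exact mul_right_cancel₀ hvw (by linear_combination hFv + hFw)
  obtain ⟨v₁, hv₁⟩ : ∃ v, G v ≠ 0 := by by_contra! h; exact hG0 (LinearMap.ext h)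
  -- `c` is constant off `ker G`: join `v` to `v₁` through a `w` with `G v w ≠ 0 ≠ G v₁ w`
  refine ⟨c v₁, LinearMap.eq_of_eqOn_compl_ker hG0 fun v hv => ?_⟩
  obtain ⟨w, hvw, hv₁w⟩ := Dual.exists_apply_ne_zero_and_apply_ne_zero hv hv₁
  rw [← hc v hv, hpair v w hvw, ← hpair v₁ w hv₁w, LinearMap.smul_apply]

theorem mem_span_singleton_of_isAlt (hG : G.IsAlt) (h : ∀ v w, G v w = 0 → F v w = 0) :
    F ∈ K ∙ G := by
  by_cases hG0 : G = 0
  · have hF0 : F = 0 := by ext v w; exact h v w (by simp [hG0])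
    simp [hF0]
  obtain ⟨c, rfl⟩ := exists_eq_smul_of_isAlt hG (fun v => h v v (hG v)) hG0
    fun v _ => Dual.mem_span_singleton_of_ker_le fun w hw => h v w hw
  exact smul_mem _ _ (mem_span_singleton_self G)

theorem not_linearIndependent_of_forall_apply (hG : G.IsAlt) (hH : H.IsAlt)
    (h : ∀ v, ¬ LinearIndependent K ![G v, H v]) : ¬ LinearIndependent K ![G, H] := by
  by_cases hG0 : G = 0
  · exact fun hi => hi.ne_zero 0 hG0
  obtain ⟨c, hc⟩ := exists_eq_smul_of_isAlt hG hH hG0 fun v hv =>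
    mem_span_singleton.mpr (exists_smul_eq_of_not_linearIndependent_pair hv (h v))
  exact fun hi => (LinearIndependent.pair_iff' (V := LinearMap.BilinForm K V) hG0).mp hi c hc.symm

theorem exists_eq_smul_wedgeForm (hP : P.IsAlt) {g h : Dual K V}
    (hgh : LinearIndependent K ![g, h]) (hspan : ∀ v, P v ∈ span K {g, h}) :
    ∃ γ : K, P = γ • g.wedgeForm h := by
  obtain ⟨u₁, u₂, hg₁, hh₁, hg₂, hh₂⟩ := Dual.exists_biorthogonal hgh
  have hP' : ∀ v w, P v w = P v u₁ * g w + P v u₂ * h w := by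
    intro v w
    obtain ⟨p, q, hpq⟩ := mem_span_pair.mp (hspan v)
    simp only [← hpq, LinearMap.add_apply, LinearMap.smul_apply, smul_eq_mul, hg₁, hh₁, hg₂,
      hh₂]
    ring
  refine ⟨P u₁ u₂, LinearMap.ext₂ fun v w => ?_⟩
  rw [hP' v w, ← hP.neg_eq u₁ v, ← hP.neg_eq u₂ v, hP' u₁ v, hP' u₂ v, hP.self_eq_zero,
    hP.self_eq_zero, ← hP.neg_eq u₁ u₂]
  simp only [LinearMap.smul_apply, Dual.wedgeForm_apply, smul_eq_mul]
  ring

theorem mem_span_of_apply_eq_zero [CharZero K] {v₀ : V} (hF₀ : F v₀ = 0)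
    (hloc : ∀ v, F v ∈ span K {G v, H v}) (h₀ : LinearIndependent K ![G v₀, H v₀]) (v : V) :
    F v ∈ span K {G v₀, H v₀} := by
  obtain ⟨u₁, u₂, hg₁, hh₁, hg₂, hh₂⟩ := Dual.exists_biorthogonal h₀
  have hshift : ∀ t : K, t ≠ 0 → F v ∈ span K {G (v₀ + t • v), H (v₀ + t • v)} := by
    intro t ht
    have e : F (v₀ + t • v) = t • F v := by rw [map_add, map_smul, hF₀, zero_add]
    have h := smul_mem _ t⁻¹ (hloc (v₀ + t • v))
    rwa [e, inv_smul_smul₀ ht] at h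
  -- the determinant of `F v, G (v₀ + t • v), H (v₀ + t • v)` at `w, u₁, u₂` is quadratic in `t`
  -- and vanishes at `t = 1, 2, 3`, hence at `t = 0`
  have key : ∀ w, F v w = F v u₁ * G v₀ w + F v u₂ * H v₀ w := by
    intro w
    have hdet := fun t ht => Dual.det_eq_zero_of_mem_span_pair (hshift t ht) w u₁ u₂
    have d₁ := hdet 1 one_ne_zero
    have d₂ := hdet 2 two_ne_zero
    have d₃ := hdet 3 three_ne_zero
    simp only [map_add, map_smul, LinearMap.add_apply, LinearMap.smul_apply, smul_eq_mul, hg₁,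
      hh₁, hg₂, hh₂] at d₁ d₂ d₃
    linear_combination 3 * d₁ - 3 * d₂ + d₃
  exact mem_span_pair.mpr ⟨F v u₁, F v u₂, LinearMap.ext fun w => by simp [key w]⟩

theorem exists_sub_smul_wedgeForm_mem_span [CharZero K] (hG : G.IsAlt) (hH : H.IsAlt)
    (hF : F.IsAlt) (hloc : ∀ v, F v ∈ span K {G v, H v}) {v₀ : V}
    (h₀ : LinearIndependent K ![G v₀, H v₀]) :
    ∃ γ : K, F - γ • Dual.wedgeForm (G v₀) (H v₀) ∈ span K {G, H} := by
  obtain ⟨p, q, hpq⟩ := mem_span_pair.mp (hloc v₀)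
  have hF₁ : (F - (p • G + q • H)).IsAlt := hF.sub ((hG.smul p).add (hH.smul q))
  have hloc₁ : ∀ v, (F - (p • G + q • H)) v ∈ span K {G v, H v} := fun v =>
    sub_mem (hloc v) (mem_span_pair.mpr ⟨p, q, rfl⟩)
  have hF₁₀ : (F - (p • G + q • H)) v₀ = 0 := by simp [← hpq]
  obtain ⟨γ, hγ⟩ := exists_eq_smul_wedgeForm hF₁ h₀ (mem_span_of_apply_eq_zero hF₁₀ hloc₁ h₀)
  refine ⟨γ, ?_⟩
  rw [← hγ, sub_sub_cancel (G := LinearMap.BilinForm K V)]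
  exact mem_span_pair.mpr ⟨p, q, rfl⟩

theorem apply_eq_zero_of_mem_ker_inf (hG : G.IsAlt) (hH : H.IsAlt) {v₀ : V}
    (h₀ : LinearIndependent K ![G v₀, H v₀])
    (hD : ∀ v, Dual.wedgeForm (G v) (H v) v₀ ∈ span K {G v₀, H v₀}) {a b : V}
    (ha : a ∈ ker (G v₀) ⊓ ker (H v₀)) (hb : b ∈ ker (G v₀) ⊓ ker (H v₀)) :
    G a b = 0 ∧ H a b = 0 := by
  obtain ⟨u₁, u₂, hg₁, hh₁, hg₂, hh₂⟩ := Dual.exists_biorthogonal h₀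
  simp only [Submodule.mem_inf, LinearMap.mem_ker] at ha hb
  have e : ∀ v, H v₀ v * G v b - G v₀ v * H v b = 0 := by
    intro v
    obtain ⟨p, q, hpq⟩ := mem_span_pair.mp (hD v)
    have := LinearMap.congr_fun hpq b
    simp only [LinearMap.add_apply, LinearMap.smul_apply, smul_eq_mul, hb.1, hb.2,
      Dual.wedgeForm_apply, ← hG.neg_eq v₀ v, ← hH.neg_eq v₀ v] at this
    linear_combination -this
  have e₁ := e (a + u₁)
  have e₁' := e u₁
  have e₂ := e (a + u₂)
  have e₂' := e u₂
  simp only [map_add, LinearMap.add_apply, ha.1, ha.2, hg₁, hh₁, hg₂, hh₂] at e₁ e₁' e₂ e₂'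
  constructor
  · linear_combination e₂ - e₂'
  · linear_combination e₁' - e₁

theorem apply_mem_span_of_forall_ker_inf {g h : Dual K V} {u₁ u₂ : V} (hg₁ : g u₁ = 1)
    (hh₁ : h u₁ = 0) (hg₂ : g u₂ = 0) (hh₂ : h u₂ = 1)
    (hP : ∀ a ∈ ker g ⊓ ker h, P u₁ a = 0 ∧ P u₂ a = 0 ∧ ∀ b ∈ ker g ⊓ ker h, P b a = 0)
    (v : V) : P v ∈ span K {g, h} := by
  refine Dual.mem_span_pair_of_ker_inf_le fun a ha => ?_
  obtain ⟨h₁, h₂, hA⟩ := hP a ha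
  have hr : v - g v • u₁ - h v • u₂ ∈ ker g ⊓ ker h := by simp [hg₁, hh₁, hg₂, hh₂]
  have hv : P v a = g v * P u₁ a + h v * P u₂ a + P (v - g v • u₁ - h v • u₂) a := by
    simp only [map_sub, map_smul, LinearMap.sub_apply, LinearMap.smul_apply, smul_eq_mul]
    ring
  rw [LinearMap.mem_ker, hv, h₁, h₂, hA _ hr]
  ring

theorem wedgeForm_mem_span_of_isotropic (hG : G.IsAlt) (hH : H.IsAlt)
    (hGH : LinearIndependent K ![G, H]) {g h : Dual K V} (hgh : LinearIndependent K ![g, h])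
    (hA : ∀ a ∈ ker g ⊓ ker h, ∀ b ∈ ker g ⊓ ker h, G a b = 0 ∧ H a b = 0)
    (hZ : ∀ v w, G v w = 0 → H v w = 0 → g.wedgeForm h v w = 0) :
    g.wedgeForm h ∈ span K {G, H} := by
  obtain ⟨u₁, u₂, hg₁, hh₁, hg₂, hh₂⟩ := Dual.exists_biorthogonal hgh
  set A := ker g ⊓ ker h
  -- Either `G (u₁ + a) (u₂ + a') = H (u₁ + a) (u₂ + a') = 0`, a linear system in `(a, a') ∈ A × A`,
  -- is solvable, giving a common zero where `g.wedgeForm h` is `1`, or some nonzero `s • G + t • H`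
  -- pairs `u₁, u₂` trivially with `A`, which makes it a multiple of `g.wedgeForm h`.
  let φ : LinearMap.BilinForm K V → (A × A →ₗ[K] K) := fun P =>
    (-(P u₂ ∘ₗ A.subtype)).coprod (P u₁ ∘ₗ A.subtype)
  have hmem : ∀ a : A, g a = 0 ∧ h a = 0 := fun a => ⟨a.2.1, a.2.2⟩
  have hφ : ∀ P : LinearMap.BilinForm K V, P.IsAlt → (∀ a ∈ A, ∀ b ∈ A, P a b = 0) →
      ∀ p : A × A, P (u₁ + p.1) (u₂ + p.2) = P u₁ u₂ + φ P p := by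
    intro P hP hPA p
    simp [φ, ← hP.neg_eq u₂ (p.1 : V), hPA _ p.1.2 _ p.2.2]
    ring
  by_cases hφi : LinearIndependent K ![φ G, φ H]
  · exfalso
    obtain ⟨p₁, p₂, hG₁, hH₁, hG₂, hH₂⟩ := Dual.exists_biorthogonal hφi
    set p := (-G u₁ u₂) • p₁ + (-H u₁ u₂) • p₂
    have hGp : G (u₁ + p.1) (u₂ + p.2) = 0 := by
      rw [hφ G hG fun a ha b hb => (hA a ha b hb).1]
      simp [p, hG₁, hG₂]
    have hHp : H (u₁ + p.1) (u₂ + p.2) = 0 := by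
      rw [hφ H hH fun a ha b hb => (hA a ha b hb).2]
      simp [p, hH₁, hH₂]
    simpa [hmem, hg₁, hh₁, hg₂, hh₂] using hZ _ _ hGp hHp
  obtain ⟨s, t, hst, hne⟩ : ∃ s t : K, s • φ G + t • φ H = 0 ∧ ¬ (s = 0 ∧ t = 0) := by
    simpa [LinearIndependent.pair_iff] using hφi
  have hPA : ∀ v, (s • G + t • H) v ∈ span K {g, h} :=
    apply_mem_span_of_forall_ker_inf hg₁ hh₁ hg₂ hh₂ fun a ha =>
      ⟨by simpa [φ] using LinearMap.congr_fun hst (0, ⟨a, ha⟩),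
        neg_eq_zero.mp (by simpa [φ, add_comm] using LinearMap.congr_fun hst (⟨a, ha⟩, 0)),
        fun b hb => by simp [hA b hb a ha]⟩
  obtain ⟨γ, hγ⟩ := exists_eq_smul_wedgeForm ((hG.smul s).add (hH.smul t)) hgh hPA
  have hγ0 : γ ≠ 0 := by
    rintro rfl
    exact hne ((LinearIndependent.pair_iff (M := LinearMap.BilinForm K V)).mp hGH s t
      (by simpa using hγ))
  rw [← inv_smul_smul₀ hγ0 (g.wedgeForm h), ← hγ]
  exact smul_mem _ _ (mem_span_pair.mpr ⟨s, t, rfl⟩)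

theorem wedgeForm_apply_mem_span [CharZero K] (hG : G.IsAlt) (hH : H.IsAlt)
    (hGH : LinearIndependent K ![G, H]) {v₀ : V} (h₀ : LinearIndependent K ![G v₀, H v₀])
    (hZ : ∀ v w, G v w = 0 → H v w = 0 → Dual.wedgeForm (G v₀) (H v₀) v w = 0) :
    Dual.wedgeForm (G v₀) (H v₀) ∈ span K {G, H} := by
  set W := Dual.wedgeForm (G v₀) (H v₀)
  by_contra hW
  have hWalt : W.IsAlt := Dual.isAlt_wedgeForm _ _
  have hloc : ∀ v, W v ∈ span K {G v, H v} := fun v =>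
    Dual.mem_span_pair_of_ker_inf_le fun w hw => hZ v w hw.1 hw.2
  have hW₀ : ∀ y, W v₀ y = 0 := fun y => by simp [W, hG.self_eq_zero, hH.self_eq_zero]
  have hD : ∀ v, Dual.wedgeForm (G v) (H v) v₀ ∈ span K {G v₀, H v₀} := by
    intro v
    by_cases hv : LinearIndependent K ![G v, H v]
    swap
    · rw [Dual.wedgeForm_eq_zero_of_not_linearIndependent hv]
      exact zero_mem _
    obtain ⟨γ, hγ⟩ := exists_sub_smul_wedgeForm_mem_span hG hH hWalt hloc hv
    have hγ0 : γ ≠ 0 := by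
      rintro rfl
      rw [zero_smul, sub_zero (G := LinearMap.BilinForm K V)] at hγ
      exact hW hγ
    obtain ⟨p, q, hpq⟩ := mem_span_pair.mp hγ
    refine mem_span_pair.mpr ⟨-γ⁻¹ * p, -γ⁻¹ * q, LinearMap.ext fun y => ?_⟩
    have e := LinearMap.congr_fun₂ hpq v₀ y
    simp only [LinearMap.add_apply, LinearMap.sub_apply, LinearMap.smul_apply, smul_eq_mul,
      hW₀] at e ⊢
    field_simp
    linear_combination -e
  exact hW (wedgeForm_mem_span_of_isotropic hG hH hGH h₀
    (fun a ha b hb => apply_eq_zero_of_mem_ker_inf hG hH h₀ hD ha hb) hZ)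

theorem mem_span_pair_of_isAlt [CharZero K] (hG : G.IsAlt) (hH : H.IsAlt)
    (hF : ∀ v w, G v w = 0 → H v w = 0 → F v w = 0) : F ∈ span K {G, H} := by
  by_cases hGH : LinearIndependent K ![G, H]
  swap
  · by_cases hG0 : G = 0
    · refine span_mono (by simp) (mem_span_singleton_of_isAlt hH fun v w hw => ?_)
      exact hF v w (by simp [hG0]) hw
    · obtain ⟨c, rfl⟩ : ∃ c : K, c • G = H := by
        by_contra! hc
        exact hGH ((LinearIndependent.pair_iff' (V := LinearMap.BilinForm K V) hG0).mpr hc)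
      refine span_mono (by simp) (mem_span_singleton_of_isAlt hG fun v w hw => ?_)
      exact hF v w hw (by simp [hw])
  obtain ⟨v₀, hv₀⟩ : ∃ v₀, LinearIndependent K ![G v₀, H v₀] := by
    by_contra! h
    exact not_linearIndependent_of_forall_apply hG hH h hGH
  obtain ⟨γ, hγ⟩ := exists_sub_smul_wedgeForm_mem_span hG hH (fun v => hF v v (hG v) (hH v))
    (fun v => Dual.mem_span_pair_of_ker_inf_le fun w hw => hF v w hw.1 hw.2) hv₀
  by_cases hγ0 : γ = 0
  · rwa [hγ0, zero_smul, sub_zero (G := LinearMap.BilinForm K V)] at hγ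
  obtain ⟨p, q, hpq⟩ := mem_span_pair.mp hγ
  have hW := wedgeForm_apply_mem_span hG hH hGH hv₀ fun v w hGw hHw => by
    have e := LinearMap.congr_fun₂ hpq v w
    simp only [LinearMap.add_apply, LinearMap.sub_apply, LinearMap.smul_apply, smul_eq_mul, hGw,
      hHw, hF v w hGw hHw] at e
    exact (mul_eq_zero.mp (by linear_combination e)).resolve_left hγ0
  have h := add_mem hγ (smul_mem _ γ hW)
  rwa [sub_add_cancel (G := LinearMap.BilinForm K V)] at h

end LinearMap.BilinForm

theorem Submodule.exists_dual_pair_of_finrank_le_add_two {L E : Submodule K V}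
    [FiniteDimensional K E] (hLE : L ≤ E) (h : finrank K E ≤ finrank K L + 2) :
    ∃ G H : Dual K V, ∀ x ∈ E, x ∈ L ↔ G x = 0 ∧ H x = 0 := by
  set L' := L.comap E.subtype
  have hQ : finrank K (E ⧸ L') ≤ finrank K (Fin 2 → K) := by
    have h₁ := L'.finrank_quotient_add_finrank
    have h₂ : finrank K L' = finrank K L := (Submodule.comapSubtypeEquivOfLe hLE).finrank_eq
    simp only [finrank_fin_fun]
    omega
  obtain ⟨ι, hι⟩ := (finrank_le_iff_exists_linearMap).mp hQ
  obtain ⟨Ψ, hΨ⟩ := LinearMap.exists_extend (ι ∘ₗ L'.mkQ)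
  refine ⟨LinearMap.proj 0 ∘ₗ Ψ, LinearMap.proj 1 ∘ₗ Ψ, fun x hx => ?_⟩
  have hΨx : Ψ x = ι (L'.mkQ ⟨x, hx⟩) := LinearMap.congr_fun hΨ ⟨x, hx⟩
  calc x ∈ L ↔ L'.mkQ ⟨x, hx⟩ = 0 := by
        rw [Submodule.mkQ_apply, Submodule.Quotient.mk_eq_zero]
        rfl
    _ ↔ Ψ x = 0 := by rw [hΨx, map_eq_zero_iff ι hι]
    _ ↔ _ := by simp [funext_iff, Fin.forall_fin_two]

section Wedge

variable {N M : ℕ}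

theorem wedge_apply_eq_det (v : Fin N → EuclideanSpace ℂ (Fin M)) (x : Fin N → Fin M) :
    wedge v x = (Matrix.of fun i k => v i (x k)).det := by
  rw [Matrix.det_apply']
  rfl

theorem wedge_mem_exteriorPow (v : Fin N → EuclideanSpace ℂ (Fin M)) :
    wedge v ∈ exteriorPow N M := by
  intro σ x
  rw [wedge_apply_eq_det, wedge_apply_eq_det, ← Matrix.det_permute']
  rfl

theorem wedge_pair_apply (v w : EuclideanSpace ℂ (Fin M)) (x : Fin 2 → Fin M) :
    wedge ![v, w] x = v (x 0) * w (x 1) - v (x 1) * w (x 0) := by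
  rw [wedge_apply_eq_det, Matrix.det_fin_two]
  rfl

theorem wedge_pair_self (v : EuclideanSpace ℂ (Fin M)) : wedge ![v, v] = 0 := by
  ext x
  simp [wedge_pair_apply, mul_comm]

variable (M) in
def wedge₂ : EuclideanSpace ℂ (Fin M) →ₗ[ℂ] EuclideanSpace ℂ (Fin M) →ₗ[ℂ] TensorPow 2 M :=
  LinearMap.mk₂ ℂ (fun v w => wedge ![v, w])
    (fun v v' w => by ext x; simp [wedge_pair_apply]; ring)
    (fun c v w => by ext x; simp [wedge_pair_apply]; ring)
    (fun v w w' => by ext x; simp [wedge_pair_apply]; ring)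
    (fun c v w => by ext x; simp [wedge_pair_apply]; ring)

@[simp]
theorem wedge₂_apply (v w : EuclideanSpace ℂ (Fin M)) : wedge₂ M v w = wedge ![v, w] := rfl

theorem isAlt_wedge₂_compr₂ (f : Dual ℂ (TensorPow 2 M)) : ((wedge₂ M).compr₂ f).IsAlt :=
  fun v => by simp [wedge_pair_self]

theorem exteriorPow_two_le_span_wedge₂ :
    exteriorPow 2 M ≤
      span ℂ (Set.range fun p : EuclideanSpace ℂ (Fin M) × _ => wedge₂ M p.1 p.2) := by
  intro ψ hψ
  have hswap : ∀ x : Fin 2 → Fin M, ψ ![x 1, x 0] = -ψ x := fun x => by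
    have h := hψ (Equiv.swap 0 1) x
    have hx : x ∘ Equiv.swap 0 1 = ![x 1, x 0] := by ext k; fin_cases k <;> rfl
    rw [← hx, h, Equiv.Perm.sign_swap (by decide)]
    simp
  have hψ' : ψ = ∑ i, ∑ j, (ψ ![i, j] / 2) •
      wedge₂ M (EuclideanSpace.single i 1) (EuclideanSpace.single j 1) := by
    ext x
    have hx : ![x 0, x 1] = x := by ext k; fin_cases k <;> rfl
    simp [wedge_pair_apply, mul_sub, Finset.sum_sub_distrib, mul_ite, hswap, hx]
    ring
  rw [hψ']
  exact sum_mem fun i _ => sum_mem fun j _ => smul_mem _ _ (subset_span ⟨(_, _), rfl⟩)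

end Wedge

theorem codim_two_spanned_by_slaters_general (M : ℕ)
    (L : Submodule ℂ (TensorPow 2 M)) (hL : L ≤ exteriorPow 2 M)
    (hcodim : Module.finrank ℂ (exteriorPow 2 M) ≤ Module.finrank ℂ L + 2) :
    Submodule.span ℂ {ψ : TensorPow 2 M | ψ ∈ L ∧ IsSlater ψ} = L := by
  refine le_antisymm (span_le.mpr fun ψ hψ => hψ.1) fun ω hω => ?_
  by_contra hωS
  obtain ⟨f, hfω, hfS⟩ := exists_dual_map_eq_bot_of_notMem hωS inferInstance
  obtain ⟨G, H, hGH⟩ := Submodule.exists_dual_pair_of_finrank_le_add_two hL hcodim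
  have hf : (wedge₂ M).compr₂ f ∈ span ℂ {(wedge₂ M).compr₂ G, (wedge₂ M).compr₂ H} := by
    refine LinearMap.BilinForm.mem_span_pair_of_isAlt (isAlt_wedge₂_compr₂ G)
      (isAlt_wedge₂_compr₂ H) fun v w hG hH => ?_
    have hmem : wedge ![v, w] ∈ L := (hGH _ (wedge_mem_exteriorPow _)).mpr ⟨hG, hH⟩
    exact (mem_bot ℂ).mp (hfS ▸ mem_map_of_mem (subset_span ⟨hmem, ![v, w], rfl⟩))
  obtain ⟨α, β, hαβ⟩ := mem_span_pair.mp hf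
  have hker : exteriorPow 2 M ≤ ker (f - α • G - β • H) := by
    refine exteriorPow_two_le_span_wedge₂.trans (span_le.mpr ?_)
    rintro _ ⟨⟨v, w⟩, rfl⟩
    have := LinearMap.congr_fun₂ hαβ v w
    simp only [LinearMap.add_apply, LinearMap.smul_apply, LinearMap.compr₂_apply, wedge₂_apply,
      smul_eq_mul] at this
    simp [← this]
  have hω' := (hGH ω (hL hω)).mp hω
  have := hker (hL hω)
  simp [hω'] at this
  exact hfω this

/-- Every subspace `L ⊆ ⋀² ℂ^M` of codimension at most 2 is spanned by the
decomposable 2-vectors it contains. -/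
theorem codim_two_spanned_by_slaters (M : ℕ) (hM : 2 ≤ M)
    (L : Submodule ℂ (TensorPow 2 M)) (hL : L ≤ exteriorPow 2 M)
    (hcodim : Module.finrank ℂ (exteriorPow 2 M) ≤ Module.finrank ℂ L + 2) :
    Submodule.span ℂ {ψ : TensorPow 2 M | ψ ∈ L ∧ IsSlater ψ} = L :=
  codim_two_spanned_by_slaters_general M L hL hcodim
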